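/- Fix a positive integer c, α > 0, and p, q ∈ [0,1] with p ≤ q and (1-p)α < c. Let E(r) = (1-r)α + α^{c+1}(1-r)^{c+1} P₀(r)/(c·c!(1-(1-r)α/c)²) denote the mean M/M/c population at load (1-r)α. Then E(p) ≥ E(q), i.e., E is monotone nonincreasing on {r ∈ [0,1] : (1-r)α < c}. -/

import Mathlib

/-!
Writing `x = (1 - r)α` for the offered load, `E(r) = x + L_q(x)` where `L_q` is the mean M/M/c
queue length, so it suffices that `L_q` is monotone on `[0, c)`. Clearing denominators,
`L_q(x) = x^(c+1) / F(x)` with `F(x) = ∑_{i<c} (c·c!/i!) (1 - x/c)² x^i + c (1 - x/c) x^c`.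
Every summand of `F` is a nonincreasing weight times `x^i` with `i ≤ c + 1`, so the
cross-multiplied inequality `x^(c+1) F(y) ≤ y^(c+1) F(x)` holds summand by summand.
-/

open Finset
open scoped Nat

section Powers

variable {R : Type*} [CommSemiring R] [PartialOrder R] [IsOrderedRing R] {x y a b : R} {k n : ℕ}

lemma pow_mul_pow_le_pow_mul_pow (hx : 0 ≤ x) (hxy : x ≤ y) (hkn : k ≤ n) :
    x ^ n * y ^ k ≤ y ^ n * x ^ k := by
  have hy : 0 ≤ y := hx.trans hxy
  obtain ⟨m, rfl⟩ := Nat.exists_eq_add_of_le hkn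
  calc x ^ (k + m) * y ^ k = x ^ k * y ^ k * x ^ m := by ring
    _ ≤ x ^ k * y ^ k * y ^ m := by gcongr
    _ = y ^ (k + m) * x ^ k := by ring

lemma pow_mul_mul_pow_le (hx : 0 ≤ x) (hxy : x ≤ y) (hkn : k ≤ n) (hb : 0 ≤ b) (hba : b ≤ a) :
    x ^ n * (b * y ^ k) ≤ y ^ n * (a * x ^ k) := by
  calc x ^ n * (b * y ^ k) = (x ^ n * y ^ k) * b := by ring
    _ ≤ (y ^ n * x ^ k) * a :=
      mul_le_mul (pow_mul_pow_le_pow_mul_pow hx hxy hkn) hba hb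
        (mul_nonneg (pow_nonneg (hx.trans hxy) n) (pow_nonneg hx k))
    _ = y ^ n * (a * x ^ k) := by ring

end Powers

namespace MMc

/-- `P₀⁻¹` at offered load `x`. -/
noncomputable def normalizer (c : ℕ) (x : ℝ) : ℝ :=
  ∑ i ∈ range c, x ^ i / (i ! : ℝ) + x ^ c / ((c ! : ℝ) * (1 - x / c))

noncomputable def meanQueueLength (c : ℕ) (x : ℝ) : ℝ :=
  x ^ (c + 1) * (normalizer c x)⁻¹ / ((c : ℝ) * (c ! : ℝ) * (1 - x / c) ^ 2)

noncomputable def clearedNormalizer (c : ℕ) (x : ℝ) : ℝ :=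
  ∑ i ∈ range c, (c : ℝ) * c ! / i ! * ((1 - x / c) ^ 2 * x ^ i) + c * ((1 - x / c) * x ^ c)

variable {c : ℕ} {x y : ℝ}

lemma one_sub_div_pos (hx : x < c) (hc : 0 < c) : 0 < 1 - x / c := by
  rw [sub_pos, div_lt_one (by exact_mod_cast hc)]
  exact hx

lemma clearedNormalizer_eq (hc : 0 < c) (hx : x < c) :
    clearedNormalizer c x = c * c ! * (1 - x / c) ^ 2 * normalizer c x := by
  have hρ := (one_sub_div_pos hx hc).ne'
  have hfac : (c ! : ℝ) ≠ 0 := by positivity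
  simp only [clearedNormalizer, normalizer, mul_add, mul_sum]
  congr 1
  · refine sum_congr rfl fun i _ => ?_
    have : (i ! : ℝ) ≠ 0 := by positivity
    field_simp
  · field_simp

lemma clearedNormalizer_pos (hc : 0 < c) (hx₀ : 0 ≤ x) (hx : x < c) :
    0 < clearedNormalizer c x := by
  have hρ := one_sub_div_pos hx hc
  refine add_pos_of_pos_of_nonneg (sum_pos' (fun i _ => by positivity) ⟨0, ?_, ?_⟩) (by positivity)
  · exact mem_range.mpr hc
  · simp only [Nat.factorial_zero, Nat.cast_one, div_one, pow_zero, mul_one]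
    have : (0 : ℝ) < c := by exact_mod_cast hc
    positivity

lemma pow_mul_clearedNormalizer_le (hc : 0 < c) (hx₀ : 0 ≤ x) (hxy : x ≤ y) (hy : y < c) :
    x ^ (c + 1) * clearedNormalizer c y ≤ y ^ (c + 1) * clearedNormalizer c x := by
  have hρy := one_sub_div_pos hy hc
  have hρ : 1 - y / c ≤ 1 - x / c := by gcongr
  simp only [clearedNormalizer, mul_add, mul_sum, mul_left_comm _ (c : ℝ),
    mul_left_comm _ ((c : ℝ) * c ! / _)]
  refine add_le_add (sum_le_sum fun i hi => mul_le_mul_of_nonneg_left ?_ (by positivity)) ?_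
  · exact pow_mul_mul_pow_le hx₀ hxy (by linarith [mem_range.mp hi]) (by positivity)
      (pow_le_pow_left₀ hρy.le hρ 2)
  · refine mul_le_mul_of_nonneg_left ?_ (by positivity)
    exact pow_mul_mul_pow_le hx₀ hxy c.le_succ hρy.le hρ

lemma meanQueueLength_eq (hc : 0 < c) (hx : x < c) :
    meanQueueLength c x = x ^ (c + 1) / clearedNormalizer c x := by
  rw [clearedNormalizer_eq hc hx, meanQueueLength, mul_comm _ (normalizer c x),
    ← div_div (x ^ (c + 1)), div_eq_mul_inv (x ^ (c + 1))]

lemma meanQueueLength_mono (hx₀ : 0 ≤ x) (hxy : x ≤ y) (hy : y < c) :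
    meanQueueLength c x ≤ meanQueueLength c y := by
  have hc : 0 < c := by exact_mod_cast hx₀.trans_lt (hxy.trans_lt hy)
  rw [meanQueueLength_eq hc (hxy.trans_lt hy), meanQueueLength_eq hc hy,
    div_le_div_iff₀ (clearedNormalizer_pos hc hx₀ (hxy.trans_lt hy))
      (clearedNormalizer_pos hc (hx₀.trans hxy) hy)]
  exact pow_mul_clearedNormalizer_le hc hx₀ hxy hy

end MMc

theorem stmt18_general (c : ℕ) (α : ℝ) (hα : 0 < α)
    (P0 : ℝ → ℝ)
    (hP0 : ∀ r, P0 r = (∑ i ∈ Finset.range c, ((1 - r) * α) ^ i / (Nat.factorial i : ℝ) +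
        ((1 - r) * α) ^ c / ((Nat.factorial c : ℝ) * (1 - (1 - r) * α / c)))⁻¹)
    (E : ℝ → ℝ)
    (hE : ∀ r, E r = (1 - r) * α +
        α ^ (c + 1) * (1 - r) ^ (c + 1) * P0 r /
          ((c : ℝ) * (Nat.factorial c : ℝ) * (1 - (1 - r) * α / c) ^ 2))
    (p q : ℝ) (hqmem : q ∈ Set.Icc (0:ℝ) 1)
    (hpq : p ≤ q) (hp : (1 - p) * α < c) :
    E q ≤ E p := by
  have hE_load : ∀ r, E r = (1 - r) * α + MMc.meanQueueLength c ((1 - r) * α) := fun r => by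
    rw [hE, hP0, MMc.meanQueueLength, MMc.normalizer, mul_comm (α ^ _), ← mul_pow]
  have hload : (1 - q) * α ≤ (1 - p) * α := by gcongr
  have hload₀ : 0 ≤ (1 - q) * α := mul_nonneg (by linarith [hqmem.2]) hα.le
  rw [hE_load, hE_load]
  exact add_le_add hload (MMc.meanQueueLength_mono hload₀ hload hp)

/-- The mean M/M/c population `E(r)` at load `(1-r)α` is nonincreasing:
for `p ≤ q` in `[0,1]` with `(1-p)α < c` (hence also `(1-q)α < c`), `E(p) ≥ E(q)`. -/
theorem stmt18 (c : ℕ) (hc : 0 < c) (α : ℝ) (hα : 0 < α)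
    (P0 : ℝ → ℝ)
    (hP0 : ∀ r, P0 r = (∑ i ∈ Finset.range c, ((1 - r) * α) ^ i / (Nat.factorial i : ℝ) +
        ((1 - r) * α) ^ c / ((Nat.factorial c : ℝ) * (1 - (1 - r) * α / c)))⁻¹)
    (E : ℝ → ℝ)
    (hE : ∀ r, E r = (1 - r) * α +
        α ^ (c + 1) * (1 - r) ^ (c + 1) * P0 r /
          ((c : ℝ) * (Nat.factorial c : ℝ) * (1 - (1 - r) * α / c) ^ 2))
    (p q : ℝ) (hpmem : p ∈ Set.Icc (0:ℝ) 1) (hqmem : q ∈ Set.Icc (0:ℝ) 1)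
    (hpq : p ≤ q) (hp : (1 - p) * α < c) :
    E q ≤ E p :=
  stmt18_general c α hα P0 hP0 E hE p q hqmem hpq hp
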